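/- Let R_0 be a noetherian ring and let R = R_0[ξ_1, …, ξ_r] be a finitely generated ℤ-graded R_0-algebra in which each generator ξ_j has positive degree. Let m = R_+ denote the irrelevant ideal (the ideal generated by all elements of positive degree) and let R̂^m denote the m-adic completion of R. If ℘ is a graded prime ideal of R, then the extension ℘·R̂^m is a prime ideal of R̂^m. -/

import Mathlib

/-!
Components of degree `< n` vanish on `R₊ⁿ`, and since `R` is generated in degrees `≤ D`, the
component of degree `j` of any element lies in `R₊^⌈j/D⌉`. So an element of the completion is a
formal sum of homogeneous components, read off from any representing Cauchy sequence. Over a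
noetherian ring, completion is exact on finite modules, so `x ∈ ℘R̂` iff the image of `x` in
`R ⧸ R₊ⁿ` lies in the image of `℘` for every `n`; for homogeneous `℘` this says that all
components of `x` lie in `℘`. Primality then follows as for power series, by multiplying the
lowest components outside `℘`.
-/

open DirectSum Finset HomogeneousIdeal

namespace AdicCompletion

variable {R : Type*} [CommRing R] {I : Ideal R}

theorem AdicCauchySequence.sub_mem_pow (f : AdicCauchySequence I R) {m n : ℕ} (h : m ≤ n) :
    f m - f n ∈ I ^ m := by
  simpa [SModEq.sub_mem] using f.property h

theorem map_subtype_mem_map_algebraMap [IsNoetherianRing R] (p : Ideal R)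
    (z : AdicCompletion I p) :
    map I p.subtype z ∈ p.map (algebraMap R (AdicCompletion I R)) := by
  obtain ⟨t, rfl⟩ := ofTensorProduct_surjective_of_finite I p z
  induction t with
  | zero => simp
  | tmul c q =>
    rw [ofTensorProduct_tmul, map_smul, map_of]
    exact Ideal.mul_mem_left _ c (Ideal.mem_map_of_mem _ q.2)
  | add u v hu hv => rw [map_add, map_add]; exact add_mem hu hv

theorem mk_mem_map_algebraMap_iff [IsNoetherianRing R] (p : Ideal R)
    (f : AdicCauchySequence I R) :
    mk I R f ∈ p.map (algebraMap R (AdicCompletion I R)) ↔ ∀ n, f n ∈ p ⊔ I ^ n := by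
  refine ⟨fun hf n => ?_, fun hf => ?_⟩
  · have hle : p.map (algebraMap R (AdicCompletion I R)) ≤
        (p.map (Ideal.Quotient.mk (I ^ n))).comap (evalₐ I n) :=
      Ideal.map_le_iff_le_comap.mpr fun q hq => by
        simpa [algebraMap_apply] using Ideal.mem_map_of_mem (Ideal.Quotient.mk (I ^ n)) hq
    simpa [Ideal.mem_quotient_iff_mem_sup] using hle hf
  · have hker : map I p.mkQ (mk I R f) = 0 := by
      ext n
      simpa [sup_comm] using hf n
    obtain ⟨z, hz⟩ := (map_exact (I := I) p.injective_subtype (LinearMap.exact_subtype_mkQ p)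
      p.mkQ_surjective _).mp hker
    exact hz ▸ map_subtype_mem_map_algebraMap p z

end AdicCompletion

theorem Nat.add_ceilDiv_le_add (i l D : ℕ) : (i + l) ⌈/⌉ D ≤ i ⌈/⌉ D + l ⌈/⌉ D := by
  rcases D.eq_zero_or_pos with rfl | hD
  · simp
  rw [ceilDiv_le_iff_le_mul hD, mul_add]
  exact add_le_add (le_smul_ceilDiv hD) (le_smul_ceilDiv hD)

namespace GradedRing

variable {A : Type*} [CommRing A] (𝒜 : ℕ → AddSubgroup A) [GradedRing 𝒜]

theorem coe_decompose_mul_eq_sum_antidiagonal (a b : A) (n : ℕ) :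
    (decompose 𝒜 (a * b) n : A) =
      ∑ ij ∈ antidiagonal n, (decompose 𝒜 a ij.1 : A) * decompose 𝒜 b ij.2 := by
  rw [decompose_mul, coe_mul_apply_eq_sum_antidiagonal]

theorem coe_decompose_mul_eq_zero_of_lt {a b : A} {k l : ℕ}
    (ha : ∀ i < k, (decompose 𝒜 a i : A) = 0) (hb : ∀ i < l, (decompose 𝒜 b i : A) = 0)
    {n : ℕ} (hn : n < k + l) : (decompose 𝒜 (a * b) n : A) = 0 := by
  rw [coe_decompose_mul_eq_sum_antidiagonal]
  refine sum_eq_zero fun ij hij => ?_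
  rw [HasAntidiagonal.mem_antidiagonal] at hij
  rcases lt_or_ge ij.1 k with h | h
  · rw [ha _ h, zero_mul]
  · rw [hb _ (by omega), mul_zero]

theorem coe_decompose_eq_zero_of_mem_irrelevant_pow {k : ℕ} {a : A}
    (ha : a ∈ (irrelevant 𝒜).toIdeal ^ k) : ∀ j < k, (decompose 𝒜 a j : A) = 0 := by
  induction k generalizing a with
  | zero => simp
  | succ k ih =>
    rw [pow_succ] at ha
    refine Submodule.mul_induction_on ha (fun x hx y hy j hj => ?_) fun x y hx hy j hj => ?_
    · refine coe_decompose_mul_eq_zero_of_lt 𝒜 (ih hx) (l := 1) ?_ hj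
      simpa [mem_irrelevant_iff, GradedRing.proj_apply] using hy
    · simp [decompose_add, hx j hj, hy j hj]

theorem coe_decompose_eq_of_sub_mem_irrelevant_pow {k : ℕ} {a b : A}
    (h : a - b ∈ (irrelevant 𝒜).toIdeal ^ k) {j : ℕ} (hj : j < k) :
    (decompose 𝒜 a j : A) = decompose 𝒜 b j := by
  simpa [decompose_sub, sub_eq_zero] using coe_decompose_eq_zero_of_mem_irrelevant_pow 𝒜 h j hj

theorem coe_decompose_mem_irrelevant_pow_ceilDiv {D : ℕ}
    (hgen : Subring.closure (⋃ i ≤ D, (𝒜 i : Set A)) = ⊤) (a : A) (j : ℕ) :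
    (decompose 𝒜 a j : A) ∈ (irrelevant 𝒜).toIdeal ^ (j ⌈/⌉ D) := by
  have hgenerator : ∀ i ≤ D, ∀ x ∈ 𝒜 i, ∀ j, (decompose 𝒜 x j : A) ∈
      (irrelevant 𝒜).toIdeal ^ (j ⌈/⌉ D) := by
    intro i hi x hx j
    obtain rfl | hij := eq_or_ne i j
    · rw [decompose_of_mem_same 𝒜 hx]
      obtain rfl | hi0 := i.eq_zero_or_pos
      · simp
      refine Ideal.pow_le_pow_right (n := 1)
        ((ceilDiv_le_iff_le_mul (hi0.trans_le hi)).mpr (by simpa)) ?_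
      rw [pow_one]
      exact mem_irrelevant_of_mem 𝒜 hi0 hx
    · simp [decompose_of_mem_ne 𝒜 hx hij]
  induction hgen ▸ Subring.mem_top a using Subring.closure_induction generalizing j with
  | mem x hx =>
    obtain ⟨i, hi, hx⟩ := Set.mem_iUnion₂.mp hx
    exact hgenerator i hi x hx j
  | zero => simp
  | one => exact hgenerator 0 D.zero_le 1 SetLike.GradedOne.one_mem j
  | add x y _ _ hx hy => simpa [decompose_add] using add_mem (hx j) (hy j)
  | neg x _ hx =>
    rw [decompose_neg, DFinsupp.neg_apply, NegMemClass.coe_neg]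
    exact neg_mem (hx j)
  | mul x y _ _ hx hy =>
    rw [coe_decompose_mul_eq_sum_antidiagonal]
    refine sum_mem fun ij hij => ?_
    rw [HasAntidiagonal.mem_antidiagonal] at hij
    refine Ideal.pow_le_pow_right (hij ▸ Nat.add_ceilDiv_le_add ij.1 ij.2 D) ?_
    rw [pow_add]
    exact Ideal.mul_mem_mul (hx ij.1) (hy ij.2)

theorem mem_sup_irrelevant_pow_of_coe_decompose_mem {D : ℕ} (hD : 0 < D)
    (hgen : Subring.closure (⋃ i ≤ D, (𝒜 i : Set A)) = ⊤) {p : Ideal A} {a : A} {n : ℕ}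
    (ha : ∀ j < n * D, (decompose 𝒜 a j : A) ∈ p) : a ∈ p ⊔ (irrelevant 𝒜).toIdeal ^ n := by
  classical
  rw [← sum_support_decompose 𝒜 a]
  refine sum_mem fun j _ => ?_
  rcases lt_or_ge j (n * D) with h | h
  · exact Ideal.mem_sup_left (ha j h)
  · refine Ideal.mem_sup_right (Ideal.pow_le_pow_right ?_
      (coe_decompose_mem_irrelevant_pow_ceilDiv 𝒜 hgen a j))
    exact ((Nat.le_div_iff_mul_le hD).mpr h).trans (floorDiv_le_ceilDiv (a := D) (b := j))

theorem coe_decompose_mul_add_notMem {p : Ideal A} [p.IsPrime] {a b : A} {k l : ℕ}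
    (ha : ∀ i < k, (decompose 𝒜 a i : A) ∈ p) (hak : (decompose 𝒜 a k : A) ∉ p)
    (hb : ∀ i < l, (decompose 𝒜 b i : A) ∈ p) (hbl : (decompose 𝒜 b l : A) ∉ p) :
    (decompose 𝒜 (a * b) (k + l) : A) ∉ p := by
  classical
  have hkl : (k, l) ∈ antidiagonal (k + l) := HasAntidiagonal.mem_antidiagonal.mpr rfl
  have hrest : ∑ ij ∈ antidiagonal (k + l) \ {(k, l)},
      (decompose 𝒜 a ij.1 : A) * decompose 𝒜 b ij.2 ∈ p := by
    refine sum_mem fun ij hij => ?_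
    obtain ⟨hij, hne⟩ := mem_sdiff.mp hij
    rw [HasAntidiagonal.mem_antidiagonal] at hij
    rcases lt_or_ge ij.1 k with h | h
    · exact p.mul_mem_right _ (ha _ h)
    · refine p.mul_mem_left _ (hb _ ?_)
      contrapose! hne
      exact mem_singleton.mpr (Prod.ext (by omega) (by omega))
  rw [coe_decompose_mul_eq_sum_antidiagonal, sum_eq_add_sum_sdiff_singleton_of_mem hkl,
    Ideal.add_mem_iff_left p hrest]
  exact Ideal.IsPrime.mul_notMem ‹_› hak hbl

open AdicCompletion in
theorem coe_decompose_adicCauchySequence_eq (f : AdicCauchySequence (irrelevant 𝒜).toIdeal A)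
    {i n : ℕ} (h : i < n) : (decompose 𝒜 (f n) i : A) = decompose 𝒜 (f (i + 1)) i :=
  (coe_decompose_eq_of_sub_mem_irrelevant_pow 𝒜 (f.sub_mem_pow h) (lt_add_one i)).symm

open AdicCompletion in
theorem mk_mem_map_algebraMap_iff_coe_decompose_mem [IsNoetherianRing A] {D : ℕ} (hD : 0 < D)
    (hgen : Subring.closure (⋃ i ≤ D, (𝒜 i : Set A)) = ⊤) {p : Ideal A}
    (hph : p.IsHomogeneous 𝒜) (f : AdicCauchySequence (irrelevant 𝒜).toIdeal A) :
    AdicCompletion.mk _ A f ∈ p.map (algebraMap A (AdicCompletion (irrelevant 𝒜).toIdeal A)) ↔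
      ∀ j, (decompose 𝒜 (f (j + 1)) j : A) ∈ p := by
  rw [mk_mem_map_algebraMap_iff]
  refine ⟨fun hf j => ?_, fun hf n => ?_⟩
  · obtain ⟨q, hq, r, hr, hqr⟩ := Submodule.mem_sup.mp (hf (j + 1))
    rw [← hqr, decompose_add, DirectSum.add_apply, AddMemClass.coe_add,
      coe_decompose_eq_zero_of_mem_irrelevant_pow 𝒜 hr j (lt_add_one j), add_zero]
    exact hph j hq
  · have htail : f (n * D) ∈ p ⊔ (irrelevant 𝒜).toIdeal ^ n :=
      mem_sup_irrelevant_pow_of_coe_decompose_mem 𝒜 hD hgen fun j hj =>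
        coe_decompose_adicCauchySequence_eq 𝒜 f hj ▸ hf j
    have hhead := f.sub_mem_pow (Nat.le_mul_of_pos_right n hD)
    simpa using add_mem (Ideal.mem_sup_right hhead) htail

open AdicCompletion in
theorem exists_lowest_coe_decompose_notMem (f : AdicCauchySequence (irrelevant 𝒜).toIdeal A)
    {p : Ideal A} (hf : ∃ j, (decompose 𝒜 (f (j + 1)) j : A) ∉ p) :
    ∃ k, ∀ n, k < n →
      (∀ i < k, (decompose 𝒜 (f n) i : A) ∈ p) ∧ (decompose 𝒜 (f n) k : A) ∉ p := by
  classical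
  refine ⟨Nat.find hf, fun n hn => ⟨fun i hi => ?_, ?_⟩⟩
  · rw [coe_decompose_adicCauchySequence_eq 𝒜 f (hi.trans hn)]
    exact not_not.mp (Nat.find_min hf hi)
  · rw [coe_decompose_adicCauchySequence_eq 𝒜 f hn]
    exact Nat.find_spec hf

end GradedRing

open AdicCompletion GradedRing in
theorem Ideal.IsHomogeneous.isPrime_map_algebraMap_adicCompletion {A : Type*} [CommRing A]
    [IsNoetherianRing A] {𝒜 : ℕ → AddSubgroup A} [GradedRing 𝒜] {D : ℕ} (hD : 0 < D)
    (hgen : Subring.closure (⋃ i ≤ D, (𝒜 i : Set A)) = ⊤) {p : Ideal A} (hp : p.IsPrime)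
    (hph : p.IsHomogeneous 𝒜) :
    (p.map (algebraMap A (AdicCompletion (irrelevant 𝒜).toIdeal A))).IsPrime := by
  have hmem := mk_mem_map_algebraMap_iff_coe_decompose_mem 𝒜 hD hgen hph
  refine ⟨fun htop => hp.ne_top ((p.eq_top_iff_one).mpr ?_), fun {x y} hxy => ?_⟩
  · have h1 := (hmem 1).mp (htop ▸ Submodule.mem_top) 0
    rwa [one_apply, decompose_of_mem_same 𝒜 SetLike.GradedOne.one_mem] at h1
  obtain ⟨f, rfl⟩ := mk_surjective _ A x
  obtain ⟨g, rfl⟩ := mk_surjective _ A y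
  rw [show mk _ A f * mk _ A g = mk _ A (f * g) from rfl, hmem] at hxy
  simp only [hmem]
  by_contra! hfg
  obtain ⟨k, hk⟩ := exists_lowest_coe_decompose_notMem 𝒜 f hfg.1
  obtain ⟨l, hl⟩ := exists_lowest_coe_decompose_notMem 𝒜 g hfg.2
  obtain ⟨hf, hfk⟩ := hk (k + l + 1) (by omega)
  obtain ⟨hg, hgl⟩ := hl (k + l + 1) (by omega)
  exact coe_decompose_mul_add_notMem 𝒜 hf hfk hg hgl (hxy (k + l))

theorem stmt_10_general (A : Type) [CommRing A] [IsNoetherianRing A] (𝒜 : ℕ → AddSubgroup A)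
    [GradedRing 𝒜]
    (hfg : ∃ (r : ℕ) (ξ : Fin r → A) (d : Fin r → ℕ),
      (∀ j, 0 < d j ∧ ξ j ∈ 𝒜 (d j)) ∧
        Subring.closure ((𝒜 0 : Set A) ∪ Set.range ξ) = ⊤)
    (p : Ideal A) (hp : p.IsPrime) (hph : Ideal.IsHomogeneous 𝒜 p) :
    (p.map (algebraMap A
      (AdicCompletion (HomogeneousIdeal.irrelevant 𝒜).toIdeal A))).IsPrime := by
  obtain ⟨r, ξ, d, hd, hcl⟩ := hfg
  refine hph.isPrime_map_algebraMap_adicCompletion (D := univ.sup d + 1) (Nat.succ_pos _) ?_ hp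
  refine eq_top_iff.mpr (hcl ▸ Subring.closure_mono ?_)
  rintro x (hx | ⟨t, rfl⟩)
  · exact Set.mem_iUnion₂.mpr ⟨0, Nat.zero_le _, hx⟩
  · exact Set.mem_iUnion₂.mpr ⟨d t, (le_sup (mem_univ t)).trans (Nat.le_succ _), (hd t).2⟩

/-- Let `R₀` be a noetherian ring and `R = R₀[ξ₁, …, ξ_r]` a finitely
generated graded `R₀`-algebra whose generators `ξ_j` are homogeneous of positive degree.
Let `m = R₊` be the irrelevant ideal and `R̂^m` the `m`-adic completion of `R`.  If `℘` is
a graded prime ideal of `R`, then `℘·R̂^m` is a prime ideal of `R̂^m`. -/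
theorem stmt_10 (A : Type) [CommRing A] [IsNoetherianRing A] (𝒜 : ℕ → AddSubgroup A)
    [GradedRing 𝒜] (h0 : IsNoetherianRing (𝒜 0))
    (hfg : ∃ (r : ℕ) (ξ : Fin r → A) (d : Fin r → ℕ),
      (∀ j, 0 < d j ∧ ξ j ∈ 𝒜 (d j)) ∧
        Subring.closure ((𝒜 0 : Set A) ∪ Set.range ξ) = ⊤)
    (p : Ideal A) (hp : p.IsPrime) (hph : Ideal.IsHomogeneous 𝒜 p) :
    (p.map (algebraMap A
      (AdicCompletion (HomogeneousIdeal.irrelevant 𝒜).toIdeal A))).IsPrime :=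
  stmt_10_general A 𝒜 hfg p hp hph
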